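/- Assume each density p_c is strictly positive Lebesgue-almost everywhere on {x : p_x(x) > 0}, L(θ) is finite for every θ, the conditional entropy is finite, and the model is well-specified: there exists θ* ∈ Θ with P(Y=c|x; θ*) = P*(Y=c|x) for every c, for p_x-almost every x. If θ̂ ∈ Θ minimizes L over Θ, then for every pair i, j ∈ {1,…,C} and for p_x-almost every x with p_x(x) > 0: h^i_{θ̂}(x) − h^j_{θ̂}(x) = log( p_i(x) / p_j(x) ). -/
import Mathlib


open MeasureTheory

open Finset in
lemma gibbs_aux {C : ℕ} (q r : Fin C → ℝ) (hq : ∀ c, 0 < q c) (hr : ∀ c, 0 < r c)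
    (hqs : ∑ c, q c = 1) (hrs : ∑ c, r c = 1) :
    ∑ c, q c * Real.log (r c) ≤ ∑ c, q c * Real.log (q c) ∧
      (∑ c, q c * Real.log (r c) = ∑ c, q c * Real.log (q c) → ∀ c, r c = q c) := by
  have key : ∀ c : Fin C, q c * Real.log (r c) - q c * Real.log (q c) ≤ r c - q c := by
    intro c
    have h1 : Real.log (r c / q c) ≤ r c / q c - 1 :=
      Real.log_le_sub_one_of_pos (div_pos (hr c) (hq c))
    have h2 : Real.log (r c / q c) = Real.log (r c) - Real.log (q c) :=
      Real.log_div (hr c).ne' (hq c).ne'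
    nlinarith [hq c, mul_le_mul_of_nonneg_left h1 (hq c).le,
      mul_div_cancel₀ (r c) (hq c).ne']
  have keystrict : ∀ c : Fin C, r c ≠ q c →
      q c * Real.log (r c) - q c * Real.log (q c) < r c - q c := by
    intro c hne
    have ht : r c / q c ≠ 1 := by
      intro hcon; rw [div_eq_one_iff_eq (hq c).ne'] at hcon; exact hne hcon
    have hlogne : Real.log (r c / q c) ≠ 0 :=
      Real.log_ne_zero_of_pos_of_ne_one (div_pos (hr c) (hq c)) ht
    have h1 : Real.log (r c / q c) + 1 < Real.exp (Real.log (r c / q c)) :=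
      Real.add_one_lt_exp hlogne
    rw [Real.exp_log (div_pos (hr c) (hq c))] at h1
    have h1' : Real.log (r c / q c) < r c / q c - 1 := by linarith
    have h2 : Real.log (r c / q c) = Real.log (r c) - Real.log (q c) :=
      Real.log_div (hr c).ne' (hq c).ne'
    nlinarith [hq c, mul_lt_mul_of_pos_left h1' (hq c),
      mul_div_cancel₀ (r c) (hq c).ne']
  have hsum : ∑ c, (q c * Real.log (r c) - q c * Real.log (q c)) ≤ ∑ c, (r c - q c) :=
    Finset.sum_le_sum fun c _ => key c
  have hzero : ∑ c : Fin C, (r c - q c) = 0 := by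
    rw [Finset.sum_sub_distrib, hqs, hrs]; ring
  constructor
  · have := hsum; rw [hzero, Finset.sum_sub_distrib] at this; linarith
  · intro heq c
    by_contra hne
    have hlt : ∑ c', (q c' * Real.log (r c') - q c' * Real.log (q c')) < ∑ c', (r c' - q c') :=
      Finset.sum_lt_sum (fun c' _ => key c') ⟨c, Finset.mem_univ c, keystrict c hne⟩
    rw [hzero, Finset.sum_sub_distrib] at hlt; linarith

/-- If the parametric softmax model is well-specified (some `θ* ∈ Θ`
realizes the true class posteriors `p_x`-a.e.), each density is strictly positive
Lebesgue-a.e. on `{x | 0 < p_x x}`, the loss is finite on `Θ`, and `θ̂ ∈ Θ` minimizes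
`L` over `Θ`, then `h^i_{θ̂} − h^j_{θ̂}` recovers `log (p i / p j)` for `p_x`-almost
every `x` with `p_x x > 0`. -/
theorem parametric_minimizer_recovers_log_ratios
    {d C P : ℕ} (hC : 2 ≤ C)
    (p : Fin C → (Fin d → ℝ) → ℝ) (w : Fin C → ℝ)
    (hp_meas : ∀ c, Measurable (p c))
    (hp_nonneg : ∀ c x, 0 ≤ p c x)
    (hp_prob : ∀ c, ∫ x, p c x = 1)
    (hw_pos : ∀ c, 0 < w c) (hw_sum : ∑ c, w c = 1)
    (px : (Fin d → ℝ) → ℝ)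
    (hpx : ∀ x, px x = ∑ c, w c * p c x)
    (Pstar : Fin C → (Fin d → ℝ) → ℝ)
    (hPstar : ∀ c x, Pstar c x = w c * p c x / px x)
    -- each density is strictly positive Lebesgue-a.e. on `{x | 0 < px x}`:
    (hp_pos : ∀ c, ∀ᵐ x, 0 < px x → 0 < p c x)
    (Θ : Set (Fin P → ℝ))
    (h : (Fin P → ℝ) → Fin C → (Fin d → ℝ) → ℝ)
    (hh_meas : ∀ θ c, Measurable (h θ c))
    (Pm : (Fin P → ℝ) → Fin C → (Fin d → ℝ) → ℝ)
    (hPm : ∀ θ c x, Pm θ c x =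
      w c * Real.exp (h θ c x) / ∑ k, w k * Real.exp (h θ k x))
    (L : (Fin P → ℝ) → ℝ)
    (hLdef : ∀ θ, L θ = -∑ c, w c * ∫ x, p c x * Real.log (Pm θ c x))
    -- `L θ` is finite for every `θ ∈ Θ`:
    (hLfin : ∀ θ ∈ Θ, ∀ c, Integrable (fun x => p c x * Real.log (Pm θ c x)))
    -- the conditional entropy is finite:
    (hHfin : Integrable (fun x => px x * ∑ c, Pstar c x * Real.log (Pstar c x)))
    -- the model is well-specified:
    (θstar : Fin P → ℝ) (hθstar : θstar ∈ Θ)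
    (hreal : ∀ᵐ x ∂(volume.withDensity fun x => ENNReal.ofReal (px x)),
      ∀ c, Pm θstar c x = Pstar c x)
    -- `θ̂ ∈ Θ` minimizes `L` over `Θ`:
    (θhat : Fin P → ℝ) (hθhat : θhat ∈ Θ)
    (hmin : ∀ θ ∈ Θ, L θhat ≤ L θ) :
    ∀ i j : Fin C,
      ∀ᵐ x ∂(volume.withDensity fun x => ENNReal.ofReal (px x)),
        0 < px x → h θhat i x - h θhat j x = Real.log (p i x / p j x) := by
  haveI : Nonempty (Fin C) := ⟨⟨0, by omega⟩⟩
  have hpx_meas : Measurable px := by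
    have hfe : px = fun x => ∑ c, w c * p c x := funext hpx
    rw [hfe]
    exact Finset.measurable_sum _ (fun c _ => (hp_meas c).const_mul _)
  have hpx_nonneg : ∀ x, 0 ≤ px x := fun x => by
    rw [hpx]
    exact Finset.sum_nonneg fun c _ => mul_nonneg (hw_pos c).le (hp_nonneg c x)
  have hpx_zero : ∀ x, px x = 0 → ∀ c, p c x = 0 := by
    intro x hx c
    have h0 : ∀ k ∈ Finset.univ, (0:ℝ) ≤ w k * p k x := fun k _ =>
      mul_nonneg (hw_pos k).le (hp_nonneg k x)
    have hz := (Finset.sum_eq_zero_iff_of_nonneg h0).1 (by rw [← hpx x]; exact hx) c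
      (Finset.mem_univ c)
    rcases mul_eq_zero.1 hz with h' | h'
    · exact absurd h' (hw_pos c).ne'
    · exact h'
  have hD_pos : ∀ θ x, 0 < ∑ k, w k * Real.exp (h θ k x) := fun θ x =>
    Finset.sum_pos (fun k _ => mul_pos (hw_pos k) (Real.exp_pos _)) Finset.univ_nonempty
  have hPm_pos : ∀ θ c x, 0 < Pm θ c x := fun θ c x => by
    rw [hPm]; exact div_pos (mul_pos (hw_pos c) (Real.exp_pos _)) (hD_pos θ x)
  have hPm_sum : ∀ θ x, ∑ c, Pm θ c x = 1 := fun θ x => by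
    have hs : ∑ c, Pm θ c x =
        (∑ c, w c * Real.exp (h θ c x)) / (∑ k, w k * Real.exp (h θ k x)) := by
      rw [Finset.sum_div]; exact Finset.sum_congr rfl fun c _ => hPm θ c x
    rw [hs, div_self (hD_pos θ x).ne']
  have hPstar_sum : ∀ x, 0 < px x → ∑ c, Pstar c x = 1 := fun x hx => by
    have hs : ∑ c, Pstar c x = (∑ c, w c * p c x) / px x := by
      rw [Finset.sum_div]; exact Finset.sum_congr rfl fun c _ => hPstar c x
    rw [hs, ← hpx x, div_self hx.ne']
  have hpos_ae : ∀ᵐ x, ∀ c, 0 < px x → 0 < p c x := ae_all_iff.2 hp_pos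
  -- key pointwise identity
  have hkey : ∀ (Q : Fin C → (Fin d → ℝ) → ℝ) x, 0 < px x →
      px x * ∑ c, Pstar c x * Q c x = ∑ c, w c * (p c x * Q c x) := by
    intro Q x hx
    rw [Finset.mul_sum]
    refine Finset.sum_congr rfl fun c _ => ?_
    rw [hPstar]
    field_simp
  -- integral of the θhat cross-entropy term
  have hG_int : Integrable (fun x => ∑ c, w c * (p c x * Real.log (Pm θhat c x))) :=
    integrable_finset_sum _ fun c _ => (hLfin θhat hθhat c).const_mul _
  have hG_val : ∫ x, (∑ c, w c * (p c x * Real.log (Pm θhat c x))) = -L θhat := by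
    rw [integral_finset_sum _ (fun c _ => (hLfin θhat hθhat c).const_mul _), hLdef, neg_neg]
    exact Finset.sum_congr rfl fun c _ => integral_const_mul _ _
  -- the θstar cross-entropy term equals the entropy term a.e.
  have hreal' : ∀ᵐ x, 0 < px x → ∀ c, Pm θstar c x = Pstar c x := by
    have hiff := (ae_withDensity_iff (p := fun x => ∀ c, Pm θstar c x = Pstar c x)
      hpx_meas.ennreal_ofReal).1 hreal
    filter_upwards [hiff] with x hx hpxpos
    exact hx (by simp [ENNReal.ofReal_eq_zero, not_le, hpxpos])
  have hGstar_eq : (fun x => ∑ c, w c * (p c x * Real.log (Pm θstar c x))) =ᵐ[volume]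
      (fun x => px x * ∑ c, Pstar c x * Real.log (Pstar c x)) := by
    filter_upwards [hreal'] with x hx
    rcases eq_or_lt_of_le (hpx_nonneg x) with hx0 | hx0
    · simp [hpx_zero x hx0.symm, ← hx0]
    · rw [hkey (fun c y => Real.log (Pstar c y)) x hx0]
      exact Finset.sum_congr rfl fun c _ => by rw [hx hx0 c]
  have hGstar_val : ∫ x, px x * ∑ c, Pstar c x * Real.log (Pstar c x) = -L θstar := by
    rw [← integral_congr_ae hGstar_eq,
      integral_finset_sum _ (fun c _ => (hLfin θstar hθstar c).const_mul _), hLdef, neg_neg]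
    exact Finset.sum_congr rfl fun c _ => integral_const_mul _ _
  -- the nonnegative "KL" integrand
  set f : (Fin d → ℝ) → ℝ := fun x =>
    px x * (∑ c, Pstar c x * Real.log (Pstar c x)) -
      ∑ c, w c * (p c x * Real.log (Pm θhat c x)) with hfdef
  have hf_int : Integrable f := hHfin.sub hG_int
  have hPstar_pos : ∀ c x, 0 < px x → 0 < p c x → 0 < Pstar c x := fun c x hx hpc => by
    rw [hPstar]; exact div_pos (mul_pos (hw_pos c) hpc) hx
  have hf_nonneg : 0 ≤ᵐ[volume] f := by
    filter_upwards [hpos_ae] with x hpos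
    rcases eq_or_lt_of_le (hpx_nonneg x) with hx0 | hx0
    · simp [hfdef, hpx_zero x hx0.symm, ← hx0]
    · have hgibbs := (gibbs_aux (fun c => Pstar c x) (fun c => Pm θhat c x)
        (fun c => hPstar_pos c x hx0 (hpos c hx0)) (fun c => hPm_pos θhat c x)
        (hPstar_sum x hx0) (hPm_sum θhat x)).1
      have hrw : ∑ c, w c * (p c x * Real.log (Pm θhat c x)) =
          px x * ∑ c, Pstar c x * Real.log (Pm θhat c x) :=
        (hkey (fun c y => Real.log (Pm θhat c y)) x hx0).symm
      simp only [hfdef, hrw]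
      rw [← mul_sub]
      exact mul_nonneg hx0.le (by linarith)
  have hf_integral_le : ∫ x, f x ≤ 0 := by
    rw [hfdef]
    have : ∫ x, (px x * (∑ c, Pstar c x * Real.log (Pstar c x)) -
        ∑ c, w c * (p c x * Real.log (Pm θhat c x))) =
        (∫ x, px x * ∑ c, Pstar c x * Real.log (Pstar c x)) -
        ∫ x, ∑ c, w c * (p c x * Real.log (Pm θhat c x)) :=
      integral_sub hHfin hG_int
    rw [this, hGstar_val, hG_val]
    have := hmin θstar hθstar
    linarith
  have hf_integral_zero : ∫ x, f x = 0 :=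
    le_antisymm hf_integral_le (integral_nonneg_of_ae hf_nonneg)
  have hf_zero : f =ᵐ[volume] 0 :=
    (integral_eq_zero_iff_of_nonneg_ae hf_nonneg hf_int).1 hf_integral_zero
  -- conclude
  intro i j
  rw [ae_withDensity_iff hpx_meas.ennreal_ofReal]
  filter_upwards [hf_zero, hpos_ae] with x hfx hpos _ hx
  have hgibbs := gibbs_aux (fun c => Pstar c x) (fun c => Pm θhat c x)
    (fun c => hPstar_pos c x hx (hpos c hx)) (fun c => hPm_pos θhat c x)
    (hPstar_sum x hx) (hPm_sum θhat x)
  have hfx0 : f x = 0 := hfx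
  have hrw : ∑ c, w c * (p c x * Real.log (Pm θhat c x)) =
      px x * ∑ c, Pstar c x * Real.log (Pm θhat c x) :=
    (hkey (fun c y => Real.log (Pm θhat c y)) x hx).symm
  have hsumeq : ∑ c, Pstar c x * Real.log (Pm θhat c x) =
      ∑ c, Pstar c x * Real.log (Pstar c x) := by
    have : px x * ((∑ c, Pstar c x * Real.log (Pstar c x)) -
        ∑ c, Pstar c x * Real.log (Pm θhat c x)) = 0 := by
      rw [mul_sub]
      simp only [hfdef, hrw] at hfx0
      linarith
    rcases mul_eq_zero.1 this with h' | h'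
    · exact absurd h' hx.ne'
    · linarith
  have heqall : ∀ c, Pm θhat c x = Pstar c x := hgibbs.2 hsumeq
  -- extract the log-ratio
  have hD := hD_pos θhat x
  have h1 : w i * Real.exp (h θhat i x) * px x =
      w i * p i x * ∑ k, w k * Real.exp (h θhat k x) := by
    have h1' := heqall i
    rw [hPm, hPstar, div_eq_div_iff hD.ne' hx.ne'] at h1'
    exact h1'
  have h2 : w j * Real.exp (h θhat j x) * px x =
      w j * p j x * ∑ k, w k * Real.exp (h θhat k x) := by
    have h2' := heqall j
    rw [hPm, hPstar, div_eq_div_iff hD.ne' hx.ne'] at h2'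
    exact h2'
  have h1' : Real.exp (h θhat i x) * px x =
      p i x * ∑ k, w k * Real.exp (h θhat k x) := by
    rw [mul_assoc, mul_assoc] at h1
    exact mul_left_cancel₀ (hw_pos i).ne' h1
  have h2' : Real.exp (h θhat j x) * px x =
      p j x * ∑ k, w k * Real.exp (h θhat k x) := by
    rw [mul_assoc, mul_assoc] at h2
    exact mul_left_cancel₀ (hw_pos j).ne' h2
  have hpj := hpos j hx
  have hfin : Real.exp (h θhat i x) * p j x = p i x * Real.exp (h θhat j x) := by
    have c1 : (Real.exp (h θhat i x) * p j x) *
        (px x * ∑ k, w k * Real.exp (h θhat k x)) =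
        (p i x * Real.exp (h θhat j x)) *
        (px x * ∑ k, w k * Real.exp (h θhat k x)) := by
      calc (Real.exp (h θhat i x) * p j x) * (px x * ∑ k, w k * Real.exp (h θhat k x))
          = (Real.exp (h θhat i x) * px x) *
            (p j x * ∑ k, w k * Real.exp (h θhat k x)) := by ring
        _ = (p i x * ∑ k, w k * Real.exp (h θhat k x)) *
            (Real.exp (h θhat j x) * px x) := by rw [h1', ← h2']
        _ = (p i x * Real.exp (h θhat j x)) *
            (px x * ∑ k, w k * Real.exp (h θhat k x)) := by ring
    exact mul_right_cancel₀ (mul_pos hx hD).ne' c1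
  have key : Real.exp (h θhat i x - h θhat j x) = p i x / p j x := by
    rw [Real.exp_sub, div_eq_div_iff (Real.exp_pos _).ne' hpj.ne']
    exact hfin
  rw [← Real.log_exp (h θhat i x - h θhat j x), key]
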